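/- Under the setup of the Poisson estimator, if (|N_1|,…,|N_K|) are independent with |N_k| ~ Poisson(μ_k λ*) where λ* = δλ_M − λ_m, then the variance of M̂_1 = ∏_{k=1}^K ((δλ_M − λ_k)/(δλ_M − λ_m))^{|N_k|} equals exp{−∑_{k=1}^K μ_k(δλ_M − λ_m)[1 − ((δλ_M − λ_k)/(δλ_M − λ_m))^2]} − exp{−2∑_{k=1}^K μ_k(λ_k − λ_m)}. -/

import Mathlib

/-!
For `N ~ Poisson(r)` the generating function is `E[b ^ N] = exp (-r (1 - b))`, so by independence
`E[∏ b_k ^ N_k] = exp (-∑ r_k (1 - b_k))`; the second moment is the same formula at `b_k ^ 2`.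
With `r_k = μ_k (δλ_M - λ_m)` and `b_k = (δλ_M - λ_k) / (δλ_M - λ_m)` one has
`r_k (1 - b_k) = μ_k (λ_k - λ_m)`.
-/

open scoped NNReal
open MeasureTheory ProbabilityTheory Real

lemma integral_pow_poissonMeasure (r : ℝ≥0) (a : ℝ) :
    ∫ n, a ^ n ∂poissonMeasure r = exp (-r * (1 - a)) := by
  have hsum : HasSum (fun n : ℕ ↦ (exp (-r) * r ^ n / n.factorial) • a ^ n)
      (exp (-r) * exp (r * a)) := by
    have h := (NormedSpace.expSeries_div_hasSum_exp ((r : ℝ) * a)).mul_left (exp (-r))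
    rw [← exp_eq_exp_ℝ] at h
    refine h.congr_fun fun n ↦ ?_
    rw [smul_eq_mul, mul_pow]
    ring
  rw [integral_poissonMeasure, hsum.tsum_eq, ← exp_add]
  ring_nf

namespace ProbabilityTheory

variable {Ω ι : Type*} [MeasurableSpace Ω] {P : Measure Ω} [Fintype ι]
  {N : ι → Ω → ℕ} {r : ι → ℝ≥0}

lemma iIndepFun.integral_prod_pow_of_map_eq_poissonMeasure (hN : iIndepFun N P)
    (hlaw : ∀ k, P.map (N k) = poissonMeasure (r k)) (b : ι → ℝ) :
    ∫ ω, ∏ k, b k ^ N k ω ∂P = exp (-∑ k, r k * (1 - b k)) := by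
  have hmeas : ∀ k, AEMeasurable (N k) P := fun k ↦
    .of_map_ne_zero (by rw [hlaw k]; exact IsProbabilityMeasure.ne_zero _)
  rw [hN.integral_fun_prod_comp hmeas fun _ ↦ .of_discrete, ← Finset.sum_neg_distrib, exp_sum]
  refine Finset.prod_congr rfl fun k _ ↦ ?_
  rw [← integral_map (hmeas k) .of_discrete, hlaw k, integral_pow_poissonMeasure, neg_mul]

lemma iIndepFun.integral_sq_prod_pow_sub_sq_of_map_eq_poissonMeasure (hN : iIndepFun N P)
    (hlaw : ∀ k, P.map (N k) = poissonMeasure (r k)) (b : ι → ℝ) :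
    (∫ ω, (∏ k, b k ^ N k ω) ^ 2 ∂P) - (∫ ω, ∏ k, b k ^ N k ω ∂P) ^ 2
      = exp (-∑ k, r k * (1 - b k ^ 2)) - exp (-(2 * ∑ k, r k * (1 - b k))) := by
  have hsq : ∀ ω, (∏ k, b k ^ N k ω) ^ 2 = ∏ k, (b k ^ 2) ^ N k ω := fun ω ↦ by
    rw [← Finset.prod_pow]
    exact Finset.prod_congr rfl fun k _ ↦ pow_right_comm _ _ _
  simp only [hsq, hN.integral_prod_pow_of_map_eq_poissonMeasure hlaw, ← exp_nat_mul]
  congr 2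
  push_cast
  ring

end ProbabilityTheory

theorem poisson_estimator_variance_general
    {Ω : Type*} [MeasurableSpace Ω] (P : Measure Ω)
    (K : ℕ)
    (μ : Fin K → ℝ) (hμ : ∀ k, 0 ≤ μ k)
    (lam : Fin K → ℝ) (hlam : ∀ k, 0 < lam k)
    (lamM lamm : ℝ)
    (hM : IsGreatest (Set.range lam) lamM) (hm : IsLeast (Set.range lam) lamm)
    (δ : ℝ) (hδ : 1 < δ)
    (N : Fin K → Ω → ℕ)
    (hNdist : ∀ k, Measure.map (N k) P
      = poissonMeasure ((μ k * (δ * lamM - lamm)).toNNReal))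
    (hNindep : iIndepFun N P) :
    (∫ ω, (∏ k, ((δ * lamM - lam k) / (δ * lamM - lamm)) ^ (N k ω)) ^ 2 ∂P)
      - (∫ ω, ∏ k, ((δ * lamM - lam k) / (δ * lamM - lamm)) ^ (N k ω) ∂P) ^ 2
      = Real.exp (-∑ k, μ k * (δ * lamM - lamm) *
          (1 - ((δ * lamM - lam k) / (δ * lamM - lamm)) ^ 2))
        - Real.exp (-(2 * ∑ k, μ k * (lam k - lamm))) := by
  obtain ⟨kM, hkM⟩ := hM.1
  have hlamm_le : lamm ≤ lamM := hkM ▸ hm.2 ⟨kM, rfl⟩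
  have hA : 0 < δ * lamM - lamm := by nlinarith [hkM ▸ hlam kM]
  have hrate : ∀ k, ((μ k * (δ * lamM - lamm)).toNNReal : ℝ) = μ k * (δ * lamM - lamm) :=
    fun k ↦ Real.coe_toNNReal _ (mul_nonneg (hμ k) hA.le)
  have hrate_mul_sub : ∀ k,
      μ k * (δ * lamM - lamm) * (1 - (δ * lamM - lam k) / (δ * lamM - lamm))
        = μ k * (lam k - lamm) := fun k ↦ by
    field_simp
    ring
  rw [hNindep.integral_sq_prod_pow_sub_sq_of_map_eq_poissonMeasure hNdist]
  simp only [hrate, hrate_mul_sub]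

/-- Variance of the Poisson estimator `M̂₁ = ∏_k ((δλ_M - λ_k)/(δλ_M - λ_m))^{|N_k|}`,
where `(|N_1|,…,|N_K|)` are independent with `|N_k| ~ Poisson(μ_k λ*)`,
`λ* = δλ_M - λ_m`. -/
theorem poisson_estimator_variance
    {Ω : Type*} [MeasurableSpace Ω] (P : Measure Ω) [IsProbabilityMeasure P]
    (K : ℕ) (hK : 0 < K)
    (μ : Fin K → ℝ) (hμ : ∀ k, 0 ≤ μ k)
    (lam : Fin K → ℝ) (hlam : ∀ k, 0 < lam k)
    (lamM lamm : ℝ)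
    (hM : IsGreatest (Set.range lam) lamM) (hm : IsLeast (Set.range lam) lamm)
    (δ : ℝ) (hδ : 1 < δ)
    (N : Fin K → Ω → ℕ) (hNmeas : ∀ k, Measurable (N k))
    (hNdist : ∀ k, Measure.map (N k) P
      = poissonMeasure ((μ k * (δ * lamM - lamm)).toNNReal))
    (hNindep : iIndepFun N P) :
    (∫ ω, (∏ k, ((δ * lamM - lam k) / (δ * lamM - lamm)) ^ (N k ω)) ^ 2 ∂P)
      - (∫ ω, ∏ k, ((δ * lamM - lam k) / (δ * lamM - lamm)) ^ (N k ω) ∂P) ^ 2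
      = Real.exp (-∑ k, μ k * (δ * lamM - lamm) *
          (1 - ((δ * lamM - lam k) / (δ * lamM - lamm)) ^ 2))
        - Real.exp (-(2 * ∑ k, μ k * (lam k - lamm))) :=
  poisson_estimator_variance_general P K μ hμ lam hlam lamM lamm hM hm δ hδ N hNdist hNindep
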